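/- arXiv:math/9202207 — 2 statements merged into one kernel-verified Lean document; each statement's English description precedes it below -/
import Mathlib

section
/- (Bianchi identity, first part) For any connection φ for a sub vector bundle F of TM, with curvature R and cocurvature R̄, the Frölicher–Nijenhuis bracket satisfies [R + R̄, φ] = 0. -/
/-!
Graded derivations of the algebra of differential forms associated with a connection
(P. Michor).  We model vector fields on a smooth manifold `M` as derivations of the
commutative `ℝ`-algebra `A = C^∞(M, ℝ)` (realized inside `Module.End ℝ A`), and
differential forms (scalar valued, resp. tangent-bundle valued) as functions on lists of
vector fields which are alternating `A`-multilinear of a fixed degree.  All the operators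
of the Frölicher-Nijenhuis calculus are defined by their classical global formulas.
-/

noncomputable section

open scoped Manifold

variable (A : Type*) [CommRing A] [Algebra ℝ A]

/-- The carrier in which vector fields live: `ℝ`-linear endomorphisms of the functions. -/
abbrev Vec := Module.End ℝ A

/-- A vector field is a derivation of the algebra of (smooth) functions. -/
def IsVectorField (X : Vec A) : Prop := ∀ f g : A, X (f * g) = f * X g + g * X f

/-- Raw scalar differential forms: functions on lists of vector fields. -/
abbrev SF := List (Vec A) → A

/-- Raw tangent-bundle valued differential forms. -/
abbrev VF := List (Vec A) → Vec A

/-- All members of the list are genuine vector fields. -/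
def VFList (ℓ : List (Vec A)) : Prop := ∀ X ∈ ℓ, IsVectorField A X

/-- `ω` is a (scalar valued) differential `p`-form: it is supported on lists of length
`p`, it is `A`-multilinear and alternating (on vector fields). -/
structure IsSForm (p : ℕ) (ω : SF A) : Prop where
  support : ∀ ℓ, ℓ.length ≠ p → ω ℓ = 0
  map_add : ∀ l₁ (X Y : Vec A) l₂, VFList A l₁ → VFList A l₂ →
    IsVectorField A X → IsVectorField A Y →
    ω (l₁ ++ (X + Y) :: l₂) = ω (l₁ ++ X :: l₂) + ω (l₁ ++ Y :: l₂)
  map_smul : ∀ l₁ (f : A) (X : Vec A) l₂, VFList A l₁ → VFList A l₂ →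
    IsVectorField A X → ω (l₁ ++ (f • X) :: l₂) = f * ω (l₁ ++ X :: l₂)
  alternate : ∀ l₁ (X : Vec A) l₂ l₃, VFList A l₁ → VFList A l₂ → VFList A l₃ →
    IsVectorField A X → ω (l₁ ++ X :: l₂ ++ X :: l₃) = 0

/-- `K` is a tangent-bundle valued differential `p`-form, `K ∈ Ω^p(M; TM)`. -/
structure IsVForm (p : ℕ) (K : VF A) : Prop where
  support : ∀ ℓ, ℓ.length ≠ p → K ℓ = 0
  map_add : ∀ l₁ (X Y : Vec A) l₂, VFList A l₁ → VFList A l₂ →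
    IsVectorField A X → IsVectorField A Y →
    K (l₁ ++ (X + Y) :: l₂) = K (l₁ ++ X :: l₂) + K (l₁ ++ Y :: l₂)
  map_smul : ∀ l₁ (f : A) (X : Vec A) l₂, VFList A l₁ → VFList A l₂ →
    IsVectorField A X → K (l₁ ++ (f • X) :: l₂) = f • K (l₁ ++ X :: l₂)
  alternate : ∀ l₁ (X : Vec A) l₂ l₃, VFList A l₁ → VFList A l₂ → VFList A l₃ →
    IsVectorField A X → K (l₁ ++ X :: l₂ ++ X :: l₃) = 0
  vec : ∀ ℓ, VFList A ℓ → IsVectorField A (K ℓ)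

/-- A connection for a sub vector bundle `F ⊆ TM`:  a fiber linear projection
`φ : TM → F`, i.e. an idempotent `A`-linear operator on vector fields (whose image is the
space of sections of `F`). -/
structure IsConnection (φ : Vec A → Vec A) : Prop where
  vf : ∀ X, IsVectorField A X → IsVectorField A (φ X)
  idem : ∀ X, IsVectorField A X → φ (φ X) = φ X
  map_add : ∀ X Y, IsVectorField A X → IsVectorField A Y → φ (X + Y) = φ X + φ Y
  map_smul : ∀ (f : A) (X : Vec A), IsVectorField A X → φ (f • X) = f • φ X

/-- The horizontal projection `h = Id - φ` of a connection `φ`. -/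
def hpr (φ : Vec A → Vec A) : Vec A → Vec A := fun X => X - φ X

/-- A bundle endomorphism of `TM` (e.g. `φ` or `h`) viewed as a `1`-form in `Ω¹(M;TM)`. -/
def oneF (φ : Vec A → Vec A) : VF A := fun ℓ => match ℓ with
  | [X] => φ X
  | _ => 0

/-- The curvature `R ∈ Ω²(M;TM)` of the connection, `R(X,Y) = φ [hX, hY]`. -/
def curv (φ : Vec A → Vec A) : VF A := fun ℓ => match ℓ with
  | [X, Y] => φ ⁅hpr A φ X, hpr A φ Y⁆
  | _ => 0

/-- The cocurvature `R̄ ∈ Ω²(M;TM)` of the connection, `R̄(X,Y) = h [φX, φY]`. -/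
def cocurv (φ : Vec A → Vec A) : VF A := fun ℓ => match ℓ with
  | [X, Y] => hpr A φ ⁅φ X, φ Y⁆
  | _ => 0

/-- `h* : Ω(M) → Ω(M)`, `(h*ω)(X₁,…,X_p) = ω(hX₁,…,hX_p)`. -/
def hstar (φ : Vec A → Vec A) : SF A →ₗ[ℝ] SF A :=
  LinearMap.pi fun ℓ => LinearMap.proj (ℓ.map (hpr A φ))

/-- The exterior derivative, by the global (Koszul) formula. -/
def extd : SF A →ₗ[ℝ] SF A :=
  LinearMap.pi fun ℓ =>
    (∑ i : Fin ℓ.length, ((-1 : ℝ) ^ (i : ℕ)) •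
      ((ℓ.get i) ∘ₗ (LinearMap.proj (ℓ.eraseIdx (i : ℕ)) : SF A →ₗ[ℝ] A)))
    + ∑ i : Fin ℓ.length,
        ∑ j ∈ Finset.univ.filter (fun j : Fin ℓ.length => (i : ℕ) < (j : ℕ)),
          ((-1 : ℝ) ^ ((i : ℕ) + (j : ℕ))) •
            (LinearMap.proj ((⁅ℓ.get i, ℓ.get j⁆ : Vec A) ::
              ((ℓ.eraseIdx (j : ℕ)).eraseIdx (i : ℕ))) : SF A →ₗ[ℝ] A)

/-- The insertion operator `i(K) : Ω^p(M) → Ω^{p+k-1}(M)` of `K ∈ Ω^k(M;TM)`: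
`(i(K)ω)(X₁,…,X_n) = 1/(k! (n-k)!) ∑_σ ε(σ) ω(K(X_{σ1},…,X_{σk}), X_{σ(k+1)},…)`. -/
def insS (k : ℕ) (K : VF A) : SF A →ₗ[ℝ] SF A :=
  LinearMap.pi fun ℓ =>
    if hk : k ≤ ℓ.length then
      (((k.factorial * (ℓ.length - k).factorial : ℕ) : ℝ))⁻¹ •
        ∑ σ : Equiv.Perm (Fin ℓ.length),
          (((Equiv.Perm.sign σ : ℤ) : ℝ)) •
            (LinearMap.proj
              ((K (List.ofFn fun m : Fin k => ℓ.get (σ (Fin.castLE hk m)))) ::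
                List.ofFn fun m : Fin (ℓ.length - k) =>
                  ℓ.get (σ ⟨k + (m : ℕ), by have := m.isLt; omega⟩)) : SF A →ₗ[ℝ] A)
    else 0

/-- The insertion operator over `h*`:  `i^h(K)` of `K ∈ Ω^k(M;TM)`, given by
`(i^h(K)ω)(X₁,…,X_n) = 1/(k! (n-k)!) ∑_σ ε(σ) ω(K(X_{σ1},…,X_{σk}), hX_{σ(k+1)},…)`. -/
def insH (φ : Vec A → Vec A) (k : ℕ) (K : VF A) : SF A →ₗ[ℝ] SF A :=
  LinearMap.pi fun ℓ =>
    if hk : k ≤ ℓ.length then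
      (((k.factorial * (ℓ.length - k).factorial : ℕ) : ℝ))⁻¹ •
        ∑ σ : Equiv.Perm (Fin ℓ.length),
          (((Equiv.Perm.sign σ : ℤ) : ℝ)) •
            (LinearMap.proj
              ((K (List.ofFn fun m : Fin k => ℓ.get (σ (Fin.castLE hk m)))) ::
                List.ofFn fun m : Fin (ℓ.length - k) =>
                  hpr A φ (ℓ.get (σ ⟨k + (m : ℕ), by have := m.isLt; omega⟩))) : SF A →ₗ[ℝ] A)
    else 0

/-- Insertion `i(K)T` of `K ∈ Ω^k(M;TM)` into a vector valued form `T`. -/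
def insVV (k : ℕ) (K : VF A) (T : VF A) : VF A := fun ℓ =>
  if hk : k ≤ ℓ.length then
    (((k.factorial * (ℓ.length - k).factorial : ℕ) : ℝ))⁻¹ •
      ∑ σ : Equiv.Perm (Fin ℓ.length),
        (((Equiv.Perm.sign σ : ℤ) : ℝ)) •
          T ((K (List.ofFn fun m : Fin k => ℓ.get (σ (Fin.castLE hk m)))) ::
              List.ofFn fun m : Fin (ℓ.length - k) =>
                ℓ.get (σ ⟨k + (m : ℕ), by have := m.isLt; omega⟩))
  else 0

/-- Insertion over `h*`, `i^h(K)T`, of `K ∈ Ω^k(M;TM)` into a vector valued form `T`. -/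
def insHVV (φ : Vec A → Vec A) (k : ℕ) (K : VF A) (T : VF A) : VF A := fun ℓ =>
  if hk : k ≤ ℓ.length then
    (((k.factorial * (ℓ.length - k).factorial : ℕ) : ℝ))⁻¹ •
      ∑ σ : Equiv.Perm (Fin ℓ.length),
        (((Equiv.Perm.sign σ : ℤ) : ℝ)) •
          T ((K (List.ofFn fun m : Fin k => ℓ.get (σ (Fin.castLE hk m)))) ::
              List.ofFn fun m : Fin (ℓ.length - k) =>
                hpr A φ (ℓ.get (σ ⟨k + (m : ℕ), by have := m.isLt; omega⟩)))
  else 0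

/-- The Lie derivative `Θ(K) = [i(K), d]` along `K ∈ Ω^k(M;TM)`. -/
def theta (k : ℕ) (K : VF A) : SF A →ₗ[ℝ] SF A :=
  insS A k K ∘ₗ extd A - ((-1 : ℝ) ^ (k + 1)) • (extd A ∘ₗ insS A k K)

/-- `Θ^h(K) = h* ∘ Θ(K) ∘ h*`. -/
def thetaH (φ : Vec A → Vec A) (k : ℕ) (K : VF A) : SF A →ₗ[ℝ] SF A :=
  hstar A φ ∘ₗ theta A k K ∘ₗ hstar A φ

/-- A function, viewed as a `0`-form. -/
def constF : A →ₗ[ℝ] SF A where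
  toFun f := fun ℓ => match ℓ with
    | [] => f
    | _ => 0
  map_add' f g := by funext ℓ; cases ℓ <;> simp
  map_smul' r f := by funext ℓ; cases ℓ <;> simp

/-- The Frölicher-Nijenhuis bracket `[K, L] ∈ Ω^{k+l}(M;TM)` of `K ∈ Ω^k(M;TM)` and
`L ∈ Ω^l(M;TM)`, characterized by `Θ([K,L]) = [Θ(K), Θ(L)]` via
`[K,L](X₁,…,X_{k+l}) f = ([Θ(K),Θ(L)] f)(X₁,…,X_{k+l})`. -/
def fnb (k l : ℕ) (K L : VF A) : VF A := fun ℓ =>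
  LinearMap.proj ℓ ∘ₗ
    (theta A k K ∘ₗ theta A l L - ((-1 : ℝ) ^ (k * l)) • (theta A l L ∘ₗ theta A k K)) ∘ₗ
      constF A

/-- Wedge product of a scalar `p`-form with a scalar form. -/
def wedgeSS (p : ℕ) (ω ψ : SF A) : SF A := fun ℓ =>
  if hp : p ≤ ℓ.length then
    (((p.factorial * (ℓ.length - p).factorial : ℕ) : ℝ))⁻¹ •
      ∑ σ : Equiv.Perm (Fin ℓ.length),
        (((Equiv.Perm.sign σ : ℤ) : ℝ)) •
          (ω (List.ofFn fun m : Fin p => ℓ.get (σ (Fin.castLE hp m))) *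
            ψ (List.ofFn fun m : Fin (ℓ.length - p) =>
                ℓ.get (σ ⟨p + (m : ℕ), by have := m.isLt; omega⟩)))
  else 0

/-- Wedge product of a scalar `p`-form with a vector valued form. -/
def wedgeSV (p : ℕ) (ω : SF A) (K : VF A) : VF A := fun ℓ =>
  if hp : p ≤ ℓ.length then
    (((p.factorial * (ℓ.length - p).factorial : ℕ) : ℝ))⁻¹ •
      ∑ σ : Equiv.Perm (Fin ℓ.length),
        (((Equiv.Perm.sign σ : ℤ) : ℝ)) •
          (ω (List.ofFn fun m : Fin p => ℓ.get (σ (Fin.castLE hp m))) •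
            K (List.ofFn fun m : Fin (ℓ.length - p) =>
                ℓ.get (σ ⟨p + (m : ℕ), by have := m.isLt; omega⟩)))
  else 0

/-- `K ∘ Λh`: precompose each argument of a vector valued form with `h`. -/
def precH (φ : Vec A → Vec A) (K : VF A) : VF A := fun ℓ => K (ℓ.map (hpr A φ))

/-- `h ∘ K`: postcompose the values of a vector valued form with `h`. -/
def postH (φ : Vec A → Vec A) (K : VF A) : VF A := fun ℓ => hpr A φ (K ℓ)

/-- `φ ∘ K`: postcompose the values of a vector valued form with `φ`. -/
def postP (φ : Vec A → Vec A) (K : VF A) : VF A := fun ℓ => φ (K ℓ)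

/-- Equality of vector valued forms (tested on vector fields). -/
def VEq (K L : VF A) : Prop := ∀ ℓ, VFList A ℓ → K ℓ = L ℓ

/-- Equality of operators on `Ω(M)` (tested on genuine forms and vector fields). -/
def OpEq (D₁ D₂ : SF A →ₗ[ℝ] SF A) : Prop :=
  ∀ (p : ℕ) (ω : SF A), IsSForm A p ω → ∀ ℓ, VFList A ℓ → D₁ ω ℓ = D₂ ω ℓ

/-- A scalar form is horizontal: it is killed by insertion of any vertical vector. -/
def HorS (φ : Vec A → Vec A) (ω : SF A) : Prop :=
  ∀ l₁ (Y : Vec A) l₂, IsVectorField A Y → ω (l₁ ++ φ Y :: l₂) = 0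

/-- A vector valued form is horizontal: it is killed by any vertical argument. -/
def HorV (φ : Vec A → Vec A) (K : VF A) : Prop :=
  ∀ l₁ (Y : Vec A) l₂, IsVectorField A Y → K (l₁ ++ φ Y :: l₂) = 0

/-- `K ∈ Ω^k(M;TM)^h`, i.e. `h ∘ K = K ∘ Λ^k h`. -/
def EquivH (φ : Vec A → Vec A) (K : VF A) : Prop :=
  ∀ ℓ, VFList A ℓ → hpr A φ (K ℓ) = K (ℓ.map (hpr A φ))

/-- `D` is a graded derivation of `Ω(M)` over `h*` of degree `k`:
`D(ω ∧ ψ) = Dω ∧ h*ψ + (-1)^{k·|ω|} h*ω ∧ Dψ`. -/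
structure IsDerOverH (φ : Vec A → Vec A) (k : ℕ) (D : SF A →ₗ[ℝ] SF A) : Prop where
  degree : ∀ p ω, IsSForm A p ω → IsSForm A (p + k) (D ω)
  leibniz : ∀ (p q : ℕ) (ω ψ : SF A), IsSForm A p ω → IsSForm A q ψ →
    D (wedgeSS A p ω ψ) = wedgeSS A (p + k) (D ω) (hstar A φ ψ)
      + ((-1 : ℝ) ^ (k * p)) • wedgeSS A p (hstar A φ ω) (D ψ)

/-- `D` commutes with `h*` (i.e. `[D, h*] = 0` on `Ω(M)`). -/
def CommutesWithHstar (φ : Vec A → Vec A) (D : SF A →ₗ[ℝ] SF A) : Prop :=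
  ∀ (p : ℕ) (ω : SF A), IsSForm A p ω → ∀ ℓ, VFList A ℓ →
    D (hstar A φ ω) ℓ = hstar A φ (D ω) ℓ

/-- `D` is algebraic: it vanishes on `Ω⁰(M)`. -/
def AlgebraicDer (D : SF A →ₗ[ℝ] SF A) : Prop := ∀ ω : SF A, IsSForm A 0 ω → D ω = 0

/-- The bracket `[K,L]^{∧,h} = i^h(K)L - (-1)^{kl} i^h(L)K` on `Ω^{*+1}(M;TM)^h`,
for `K ∈ Ω^{k+1}(M;TM)^h` and `L ∈ Ω^{l+1}(M;TM)^h`. -/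
def hookBr (φ : Vec A → Vec A) (k l : ℕ) (K L : VF A) : VF A :=
  insHVV A φ (k + 1) K L - ((-1 : ℝ) ^ (k * l)) • insHVV A φ (l + 1) L K

/-- The classical covariant derivative `D^h = h* ∘ d`. -/
def covD (φ : Vec A → Vec A) : SF A →ₗ[ℝ] SF A := hstar A φ ∘ₗ extd A

/-- The covariant derivative `d^h = h* ∘ d ∘ h*`. -/
def covd (φ : Vec A → Vec A) : SF A →ₗ[ℝ] SF A := hstar A φ ∘ₗ extd A ∘ₗ hstar A φ

end

/-- The commutative `ℝ`-algebra of smooth real valued functions on a manifold `M`. -/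
abbrev SmoothFns {EM : Type*} [NormedAddCommGroup EM] [NormedSpace ℝ EM]
    {HM : Type*} [TopologicalSpace HM] (IM : ModelWithCorners ℝ EM HM)
    (M : Type*) [TopologicalSpace M] [ChartedSpace HM M] : Type _ :=
  ContMDiffMap IM (modelWithCornersSelf ℝ ℝ) M ℝ (⊤ : ℕ∞)


/-!
Evaluated on vector fields `X, Y, Z` and a function `f`, the bracket `[K, φ]` defined through
`Θ` is given by the classical formula
`Σ_cyc ([K(X,Y), φZ] - φ[K(X,Y), Z] - φK([X,Y], Z) + K([φX,Y] - [φY,X] - φ[X,Y], Z))`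
(all other terms in which a vector field differentiates `f` cancel), an identity in the Lie
algebra of vector fields, on which `φ` is additive. For `K = R + R̄ = φ[h·,h·] + h[φ·,φ·]` this
expression is additive in each argument, so it suffices to evaluate it on arguments that are
horizontal or vertical. In the mixed cases the terms cancel in pairs; on horizontal arguments
the expression is `-φ` of the Jacobiator `[[X,Y],Z] + [[Y,Z],X] + [[Z,X],Y]`, and on vertical
arguments it is `h` of it.
-/

attribute [local instance] LieRing.ofAssociativeRing LieAlgebra.ofAssociativeAlgebra

open Finset

section LieRing
variable {L : Type*} [LieRing L]

lemma lie_lie_add_lie_lie_add_lie_lie (X Y Z : L) :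
    ⁅⁅X, Y⁆, Z⁆ + ⁅⁅Y, Z⁆, X⁆ + ⁅⁅Z, X⁆, Y⁆ = 0 := by
  rw [← lie_skew ⁅X, Y⁆ Z, ← lie_skew ⁅Y, Z⁆ X, ← lie_skew ⁅Z, X⁆ Y, ← neg_add, ← neg_add,
    lie_jacobi, neg_zero]

def fnBracketTerm (K : L → L → L) (P : L →+ L) (X Y Z : L) : L :=
  ⁅K X Y, P Z⁆ - P ⁅K X Y, Z⁆ - P (K ⁅X, Y⁆ Z) + K ⁅P X, Y⁆ Z - K ⁅P Y, X⁆ Z - K (P ⁅X, Y⁆) Z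

/-- The Frölicher–Nijenhuis bracket `[K, P](X, Y, Z)` of a `2`-form `K` with a `1`-form `P`. -/
def fnBracket (K : L → L → L) (P : L →+ L) (X Y Z : L) : L :=
  fnBracketTerm K P X Y Z + fnBracketTerm K P Y Z X + fnBracketTerm K P Z X Y

lemma fnBracket_rotate (K : L → L → L) (P : L →+ L) (X Y Z : L) :
    fnBracket K P X Y Z = fnBracket K P Y Z X := by
  unfold fnBracket
  abel

/-- `R + R̄` for the projection `P`, with `h = 1 - P`: `P[hX, hY] + h[PX, PY]`. -/
def curvPlusCocurv (P : L →+ L) (X Y : L) : L :=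
  P ⁅X - P X, Y - P Y⁆ + (⁅P X, P Y⁆ - P ⁅P X, P Y⁆)

variable (P : L →+ L)

lemma curvPlusCocurv_swap (X Y : L) : curvPlusCocurv P Y X = -curvPlusCocurv P X Y := by
  rw [curvPlusCocurv, curvPlusCocurv, ← lie_skew (Y - P Y), ← lie_skew (P Y), map_neg, map_neg]
  abel

lemma curvPlusCocurv_neg_left (X Y : L) : curvPlusCocurv P (-X) Y = -curvPlusCocurv P X Y := by
  simp only [curvPlusCocurv, map_neg, map_add, map_sub, neg_lie, add_lie, sub_lie, sub_neg_eq_add]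
  abel

lemma fnBracket_curvPlusCocurv_add_left (X X' Y Z : L) :
    fnBracket (curvPlusCocurv P) P (X + X') Y Z =
      fnBracket (curvPlusCocurv P) P X Y Z + fnBracket (curvPlusCocurv P) P X' Y Z := by
  simp only [fnBracket, fnBracketTerm, curvPlusCocurv, map_add, map_sub, add_lie, lie_add,
    sub_lie, lie_sub]
  abel

variable {P} (hP : ∀ X, P (P X) = P X)
include hP

lemma fnBracket_curvPlusCocurv_eq_zero_of_horizontal_or_vertical {X Y Z : L}
    (hX : P X = 0 ∨ P X = X) (hY : P Y = 0 ∨ P Y = Y) (hZ : P Z = 0 ∨ P Z = Z) :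
    fnBracket (curvPlusCocurv P) P X Y Z = 0 := by
  have hJ := lie_lie_add_lie_lie_add_lie_lie X Y Z
  have hPJ : P ⁅⁅X, Y⁆, Z⁆ + P ⁅⁅Y, Z⁆, X⁆ + P ⁅⁅Z, X⁆, Y⁆ = 0 := by
    rw [← map_add, ← map_add, hJ, map_zero]
  rcases hX with hX | hX <;> rcases hY with hY | hY <;> rcases hZ with hZ | hZ <;>
  simp only [fnBracket, fnBracketTerm, curvPlusCocurv, map_add, map_sub, add_lie, sub_lie, hX,
    hY, hZ, hP, map_zero, lie_zero, zero_lie, sub_zero, sub_self,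
    ← lie_skew Y X, ← lie_skew Z Y, ← lie_skew X Z, map_neg, neg_lie]
  case inl.inl.inl => linear_combination (norm := abel) -hPJ
  case inr.inr.inr => linear_combination (norm := abel) hJ - hPJ
  all_goals abel

theorem fnBracket_curvPlusCocurv_eq_zero (X Y Z : L) :
    fnBracket (curvPlusCocurv P) P X Y Z = 0 := by
  have rot := fnBracket_rotate (curvPlusCocurv P) P
  have add₁ := fnBracket_curvPlusCocurv_add_left P
  have add₂ : ∀ X Y Y' Z, fnBracket (curvPlusCocurv P) P X (Y + Y') Z =
      fnBracket (curvPlusCocurv P) P X Y Z + fnBracket (curvPlusCocurv P) P X Y' Z :=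
    fun X Y Y' Z => by rw [rot X, add₁, ← rot X Y Z, ← rot X Y' Z]
  have add₃ : ∀ X Y Z Z', fnBracket (curvPlusCocurv P) P X Y (Z + Z') =
      fnBracket (curvPlusCocurv P) P X Y Z + fnBracket (curvPlusCocurv P) P X Y Z' :=
    fun X Y Z Z' => by
      rw [rot X, rot Y, add₁, ← rot Y Z X, ← rot X Y Z, ← rot Y Z' X, ← rot X Y Z']
  have hor : ∀ W, P (W - P W) = 0 := fun W => by rw [map_sub, hP, sub_self]
  rw [← sub_add_cancel X (P X), ← sub_add_cancel Y (P Y), ← sub_add_cancel Z (P Z)]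
  simp only [add₁, add₂, add₃, fnBracket_curvPlusCocurv_eq_zero_of_horizontal_or_vertical hP,
    hor, hP, true_or, or_true, add_zero]

end LieRing

section Evaluation
variable {A : Type*} [CommRing A] [Algebra ℝ A]

lemma sum_perm_fin_two {M : Type*} [AddCommMonoid M] (g : Equiv.Perm (Fin 2) → M) :
    ∑ σ, g σ = g 1 + g (Equiv.swap 0 1) := by
  rw [show (univ : Finset (Equiv.Perm (Fin 2))) = {1, Equiv.swap 0 1} by decide,
    sum_insert (by decide), sum_singleton]

lemma sum_perm_fin_three {M : Type*} [AddCommMonoid M] (g : Equiv.Perm (Fin 3) → M) :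
    ∑ σ, g σ = g 1 + g (Equiv.swap 0 1) + g (Equiv.swap 0 2) + g (Equiv.swap 1 2)
      + g (Equiv.swap 0 1 * Equiv.swap 1 2) + g (Equiv.swap 0 2 * Equiv.swap 1 2) := by
  rw [show (univ : Finset (Equiv.Perm (Fin 3))) =
      {1, Equiv.swap 0 1, Equiv.swap 0 2, Equiv.swap 1 2,
       Equiv.swap 0 1 * Equiv.swap 1 2, Equiv.swap 0 2 * Equiv.swap 1 2} by decide]
  repeat rw [sum_insert (by decide)]
  rw [sum_singleton]
  abel

lemma extd_apply (ω : SF A) (ℓ : List (Vec A)) :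
    extd A ω ℓ = (∑ i : Fin ℓ.length, ((-1 : ℝ) ^ (i : ℕ)) • (ℓ.get i) (ω (ℓ.eraseIdx i)))
      + ∑ i : Fin ℓ.length, ∑ j ∈ univ.filter (fun j : Fin ℓ.length => (i : ℕ) < j),
          ((-1 : ℝ) ^ ((i : ℕ) + j)) • ω (⁅ℓ.get i, ℓ.get j⁆ :: (ℓ.eraseIdx j).eraseIdx i) := by
  simp [extd]

lemma extd_one (ω : SF A) (X : Vec A) : extd A ω [X] = X (ω []) := by
  simp [extd_apply]

lemma extd_two (ω : SF A) (X Y : Vec A) :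
    extd A ω [X, Y] = X (ω [Y]) - Y (ω [X]) - ω [⁅X, Y⁆] := by
  rw [extd_apply]
  erw [Fin.sum_univ_two, Fin.sum_univ_two]
  simp [sum_filter, List.eraseIdx, sub_eq_add_neg, add_comm]

lemma extd_three (ω : SF A) (X Y Z : Vec A) :
    extd A ω [X, Y, Z] = X (ω [Y, Z]) - Y (ω [X, Z]) + Z (ω [X, Y])
      - ω [⁅X, Y⁆, Z] + ω [⁅X, Z⁆, Y] - ω [⁅Y, Z⁆, X] := by
  rw [extd_apply]
  erw [Fin.sum_univ_three, Fin.sum_univ_three]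
  simp [Fin.sum_univ_three, sum_filter, List.eraseIdx]
  norm_num
  abel

lemma insS_of_le {k : ℕ} (K : VF A) (ω : SF A) {ℓ : List (Vec A)} (hk : k ≤ ℓ.length) :
    insS A k K ω ℓ = (((k.factorial * (ℓ.length - k).factorial : ℕ) : ℝ))⁻¹ •
        ∑ σ : Equiv.Perm (Fin ℓ.length), (((Equiv.Perm.sign σ : ℤ) : ℝ)) •
          ω ((K (List.ofFn fun m : Fin k => ℓ.get (σ (Fin.castLE hk m)))) ::
            List.ofFn fun m : Fin (ℓ.length - k) =>
              ℓ.get (σ ⟨k + (m : ℕ), by have := m.isLt; omega⟩)) := by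
  simp [insS, dif_pos hk]

lemma insS_of_lt {k : ℕ} (K : VF A) (ω : SF A) {ℓ : List (Vec A)} (hk : ℓ.length < k) :
    insS A k K ω ℓ = 0 := by
  simp [insS, dif_neg (not_le.2 hk)]

lemma insS_one_one (K : VF A) (ω : SF A) (X : Vec A) : insS A 1 K ω [X] = ω [K [X]] := by
  rw [insS_of_le K ω (by simp)]
  simp [List.ofFn_succ]

lemma insS_one_two (K : VF A) (ω : SF A) (X Y : Vec A) :
    insS A 1 K ω [X, Y] = ω [K [X], Y] - ω [K [Y], X] := by
  rw [insS_of_le K ω (by simp)]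
  simp [sum_perm_fin_two, List.ofFn_succ, Nat.factorial, sub_eq_add_neg]

lemma insS_two_two (K : VF A) (ω : SF A) (X Y : Vec A) :
    insS A 2 K ω [X, Y] = (2 : ℝ)⁻¹ • (ω [K [X, Y]] - ω [K [Y, X]]) := by
  rw [insS_of_le K ω (by simp)]
  simp [sum_perm_fin_two, List.ofFn_succ, Nat.factorial, sub_eq_add_neg]

lemma insS_one_three (K : VF A) (ω : SF A) (X Y Z : Vec A) :
    insS A 1 K ω [X, Y, Z] = (2 : ℝ)⁻¹ •
      (ω [K [X], Y, Z] - ω [K [Y], X, Z] - ω [K [Z], Y, X]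
        - ω [K [X], Z, Y] + ω [K [Y], Z, X] + ω [K [Z], X, Y]) := by
  rw [insS_of_le K ω (by simp)]
  simp +decide [sum_perm_fin_three, List.ofFn_succ, Nat.factorial, Equiv.Perm.mul_apply,
    Equiv.swap_apply_def, Equiv.Perm.sign_swap', Fin.ext_iff]
  module

lemma insS_two_three (K : VF A) (ω : SF A) (X Y Z : Vec A) :
    insS A 2 K ω [X, Y, Z] = (2 : ℝ)⁻¹ •
      (ω [K [X, Y], Z] - ω [K [Y, X], Z] - ω [K [Z, Y], X]
        - ω [K [X, Z], Y] + ω [K [Y, Z], X] + ω [K [Z, X], Y]) := by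
  rw [insS_of_le K ω (by simp)]
  simp +decide [sum_perm_fin_three, List.ofFn_succ, Nat.factorial, Equiv.Perm.mul_apply,
    Equiv.swap_apply_def, Equiv.Perm.sign_swap', Fin.ext_iff]
  module

lemma theta_apply (k : ℕ) (K : VF A) (ω : SF A) (ℓ : List (Vec A)) :
    theta A k K ω ℓ =
      insS A k K (extd A ω) ℓ - ((-1 : ℝ) ^ (k + 1)) • extd A (insS A k K ω) ℓ := by
  simp [theta]

lemma fnb_apply (k l : ℕ) (K L : VF A) (ℓ : List (Vec A)) (f : A) :
    fnb A k l K L ℓ f = theta A k K (theta A l L (constF A f)) ℓ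
      - ((-1 : ℝ) ^ (k * l)) • theta A l L (theta A k K (constF A f)) ℓ := by
  simp [fnb]

lemma theta_one_constF_singleton (K : VF A) (f : A) (X : Vec A) :
    theta A 1 K (constF A f) [X] = K [X] f := by
  rw [theta_apply, insS_one_one, extd_one, extd_one, insS_of_lt _ _ (by simp)]
  simp [constF]

lemma theta_two_constF_pair (K : VF A) (f : A) (X Y : Vec A) :
    theta A 2 K (constF A f) [X, Y] = (2 : ℝ)⁻¹ • (K [X, Y] f - K [Y, X] f) := by
  rw [theta_apply, insS_two_two, extd_one, extd_one, extd_two, insS_of_lt _ _ (by simp),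
    insS_of_lt _ _ (by simp), insS_of_lt _ _ (by simp)]
  simp [constF]

def HasDegree (p : ℕ) (ω : SF A) : Prop := ∀ ℓ : List (Vec A), ℓ.length ≠ p → ω ℓ = 0

lemma hasDegree_constF (f : A) : HasDegree 0 (constF A f) := by
  rintro (_ | ⟨X, ℓ⟩) h
  · simp at h
  · rfl

lemma HasDegree.extd {p : ℕ} {ω : SF A} (hω : HasDegree p ω) :
    HasDegree (p + 1) (extd A ω) := by
  intro ℓ hℓ
  rw [extd_apply, sum_eq_zero, sum_eq_zero, add_zero]
  · intro i _
    refine sum_eq_zero fun j hj => ?_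
    have hij := (mem_filter.mp hj).2
    rw [hω, smul_zero]
    rw [List.length_cons, List.length_eraseIdx_of_lt, List.length_eraseIdx_of_lt j.isLt]
    · omega
    · rw [List.length_eraseIdx_of_lt j.isLt]; omega
  · intro i _
    rw [hω, map_zero, smul_zero]
    rw [List.length_eraseIdx_of_lt i.isLt]
    have := i.isLt
    omega

lemma HasDegree.insS {k p : ℕ} (hk : 1 ≤ k) (K : VF A) {ω : SF A} (hω : HasDegree p ω) :
    HasDegree (p + k - 1) (insS A k K ω) := by
  intro ℓ hℓ
  rcases le_or_gt k ℓ.length with hkℓ | hkℓ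
  · rw [insS_of_le K ω hkℓ, sum_eq_zero, smul_zero]
    intro σ _
    rw [hω, smul_zero]
    simp only [List.length_cons, List.length_ofFn]
    omega
  · exact insS_of_lt K ω hkℓ

lemma HasDegree.theta {k p : ℕ} (hk : 1 ≤ k) (K : VF A) {ω : SF A} (hω : HasDegree p ω) :
    HasDegree (p + k) (theta A k K ω) := by
  intro ℓ hℓ
  rw [theta_apply, hω.extd.insS hk K ℓ (by omega), (hω.insS hk K).extd ℓ (by omega), smul_zero,
    sub_zero]

lemma fnb_of_length_ne {k l : ℕ} (hk : 1 ≤ k) (hl : 1 ≤ l) (K L : VF A) {ℓ : List (Vec A)}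
    (hℓ : ℓ.length ≠ k + l) : fnb A k l K L ℓ = 0 := by
  ext f
  rw [fnb_apply, (((hasDegree_constF f).theta hl L).theta hk K) ℓ (by omega),
    (((hasDegree_constF f).theta hk K).theta hl L) ℓ (by omega), smul_zero, sub_zero]
  rfl

end Evaluation

section VectorFields
variable {A : Type*} [CommRing A] [Algebra ℝ A]

lemma Vec.lie_apply (X Y : Vec A) (f : A) : ⁅X, Y⁆ f = X (Y f) - Y (X f) := by
  simp [Ring.lie_def]

variable (A) in
def vectorFields : LieSubalgebra ℝ (Vec A) where
  carrier := {X | IsVectorField A X}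
  zero_mem' := fun f g => by simp
  add_mem' := fun {X Y} hX hY f g => by simp only [LinearMap.add_apply, hX f g, hY f g]; ring
  smul_mem' := fun c X hX f g => by simp [hX f g]
  lie_mem' := fun {X Y} hX hY f g => by
    simp only [Vec.lie_apply, hX f g, hY f g, map_add, hX f (Y g), hX g (Y f), hY f (X g),
      hY g (X f)]
    ring

def IsConnection.toAddMonoidHom {φ : Vec A → Vec A} (hφ : IsConnection A φ) :
    vectorFields A →+ vectorFields A where
  toFun X := ⟨φ X, hφ.vf X X.2⟩
  map_zero' := Subtype.ext <| by
    simpa using hφ.map_smul 0 0 (vectorFields A).zero_mem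
  map_add' X Y := Subtype.ext <| hφ.map_add X Y X.2 Y.2

lemma IsConnection.toAddMonoidHom_idem {φ : Vec A → Vec A} (hφ : IsConnection A φ)
    (X : vectorFields A) : hφ.toAddMonoidHom (hφ.toAddMonoidHom X) = hφ.toAddMonoidHom X :=
  Subtype.ext <| hφ.idem X X.2

lemma IsConnection.curv_add_cocurv_coe {φ : Vec A → Vec A} (hφ : IsConnection A φ)
    (X Y : vectorFields A) :
    (curv A φ + cocurv A φ) [X, Y] = curvPlusCocurv hφ.toAddMonoidHom X Y :=
  rfl

set_option maxHeartbeats 400000 in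
theorem fnb_two_one_eq_fnBracket {K : VF A} {φ : Vec A → Vec A}
    {κ : vectorFields A → vectorFields A → vectorFields A} {Φ : vectorFields A →+ vectorFields A}
    (hκ_swap : ∀ u v, κ v u = -κ u v) (hκ_neg : ∀ u v, κ (-u) v = -κ u v)
    (hK : ∀ u v : vectorFields A, K [u, v] = κ u v) (hφ : ∀ u : vectorFields A, φ u = Φ u)
    (X Y Z : vectorFields A) (f : A) :
    fnb A 2 1 K (oneF A φ) [X, Y, Z] f = ((fnBracket κ Φ X Y Z : vectorFields A) : Vec A) f := by
  have hκ_neg_right : ∀ u v, κ u (-v) = -κ u v := fun u v => by rw [hκ_swap, hκ_neg, ← hκ_swap]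
  -- Writing `κ = β - βᵀ` makes its antisymmetry syntactic, so that the two sides can be compared
  -- term by term.
  obtain ⟨β, hβ⟩ : ∃ β : vectorFields A → vectorFields A → vectorFields A,
      ∀ u v, κ u v = β u v - β v u :=
    ⟨fun u v => (2 : ℝ)⁻¹ • κ u v, fun u v => by
      show _ = (2 : ℝ)⁻¹ • κ u v - (2 : ℝ)⁻¹ • κ v u
      rw [hκ_swap u v]
      module⟩
  rw [fnb_apply, theta_apply, theta_apply, insS_two_three, insS_one_three, extd_three, extd_three]
  simp only [insS_two_two, insS_one_two, extd_two, extd_three, theta_one_constF_singleton,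
    theta_two_constF_pair, oneF]
  simp only [← LieSubalgebra.coe_bracket, hK, hφ]
  rw [← lie_skew Y X, ← lie_skew Z Y, ← lie_skew X Z]
  simp only [fnBracket, fnBracketTerm, map_neg, hκ_neg, hκ_neg_right]
  simp only [hβ, map_sub, sub_lie, AddMemClass.coe_add,
    AddSubgroupClass.coe_sub, NegMemClass.coe_neg, LieSubalgebra.coe_bracket, Vec.lie_apply,
    LinearMap.add_apply, LinearMap.sub_apply, LinearMap.neg_apply, map_smul]
  norm_num only [pow_succ, pow_zero, one_mul, neg_one_mul, neg_smul, one_smul]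
  module

end VectorFields

theorem bianchi_identity_first_part_general
    {EM : Type*} [NormedAddCommGroup EM] [NormedSpace ℝ EM]
    {HM : Type*} [TopologicalSpace HM] {IM : ModelWithCorners ℝ EM HM}
    {M : Type*} [TopologicalSpace M] [ChartedSpace HM M]
    (φ : Vec (SmoothFns IM M) → Vec (SmoothFns IM M))
    (hφ : IsConnection (SmoothFns IM M) φ) :
    VEq (SmoothFns IM M)
      (fnb (SmoothFns IM M) 2 1 (curv (SmoothFns IM M) φ + cocurv (SmoothFns IM M) φ) (oneF (SmoothFns IM M) φ))
      0 := by
  intro ℓ hℓ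
  obtain h3 | h3 := eq_or_ne ℓ.length 3
  · obtain ⟨X, Y, Z, rfl⟩ := List.length_eq_three.mp h3
    ext f
    have hX : IsVectorField _ X := hℓ X (by simp)
    have hY : IsVectorField _ Y := hℓ Y (by simp)
    have hZ : IsVectorField _ Z := hℓ Z (by simp)
    rw [fnb_two_one_eq_fnBracket (Φ := hφ.toAddMonoidHom) (curvPlusCocurv_swap _)
      (curvPlusCocurv_neg_left _) hφ.curv_add_cocurv_coe (fun _ => rfl) ⟨X, hX⟩ ⟨Y, hY⟩ ⟨Z, hZ⟩,
      fnBracket_curvPlusCocurv_eq_zero hφ.toAddMonoidHom_idem]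
    rfl
  · exact fnb_of_length_ne one_le_two le_rfl _ _ h3

/-- **Bianchi identity, first part** (Lemma 1.4).  For any connection `φ` for a sub
vector bundle `F ⊆ TM` of a smooth manifold `M`, with curvature `R` and cocurvature `R̄`,
the Frölicher–Nijenhuis bracket satisfies `[R + R̄, φ] = 0`. -/
theorem bianchi_identity_first_part
    {EM : Type*} [NormedAddCommGroup EM] [NormedSpace ℝ EM]
    {HM : Type*} [TopologicalSpace HM] {IM : ModelWithCorners ℝ EM HM}
    {M : Type*} [TopologicalSpace M] [ChartedSpace HM M] [IsManifold IM (⊤ : ℕ∞) M]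
    (φ : Vec (SmoothFns IM M) → Vec (SmoothFns IM M))
    (hφ : IsConnection (SmoothFns IM M) φ) :
    VEq (SmoothFns IM M)
      (fnb (SmoothFns IM M) 2 1 (curv (SmoothFns IM M) φ + cocurv (SmoothFns IM M) φ) (oneF (SmoothFns IM M) φ))
      0 :=
  bianchi_identity_first_part_general φ hφ
end

section
/- For K ∈ Ω^{k+1}(M;TM) the following identities of operators on Ω(M) hold: h*∘i(K) = i^h(K∘Λ^{k+1}h) = h*∘i^h(K); i(K)∘h* = i^h(h∘K) = i^h(K)∘h*; [i(K), h*] = [i^h(K), h*] = i^h(h∘K − K∘Λ^{k+1}h); and h*∘i(K)∘h* = h*∘i^h(K)∘h* = i^h(h∘K∘Λ^{k+1}h). -/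
/-!
On a list of vector fields `X₁,…,Xₙ`, each of `h* ∘ i(K)`, `i(K) ∘ h*`, `h* ∘ i^h(K)`, … is
the alternating sum `∑_σ ε(σ) ω(K'(X_{σ1},…), hX_{σ(k+1)},…)` for `K'` one of `K ∘ Λh`,
`h ∘ K`, `h ∘ K ∘ Λh`: applying `h*` after an insertion feeds `h` into every argument,
applying it before feeds `h` into every slot of `ω`, and the superfluous copies of `h`
disappear because `h` is idempotent. The identity for the commutators then follows from
additivity of `ω` in its first slot.
-/

section InsertionWith

variable {A : Type*} [CommRing A] [Algebra ℝ A]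

theorem IsVectorField.sub {X Y : Vec A} (hX : IsVectorField A X) (hY : IsVectorField A Y) :
    IsVectorField A (X - Y) := by
  intro f g
  simp only [LinearMap.sub_apply, hX f g, hY f g]
  ring

theorem VFList.ofFn {n : ℕ} {v : Fin n → Vec A} (hv : ∀ i, IsVectorField A (v i)) :
    VFList A (List.ofFn v) := by
  intro X hX
  obtain ⟨i, rfl⟩ := List.mem_ofFn.mp hX
  exact hv i

theorem VFList.get {ℓ : List (Vec A)} (hℓ : VFList A ℓ) (i : Fin ℓ.length) :
    IsVectorField A (ℓ.get i) :=
  hℓ _ (List.get_mem ℓ i)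

theorem IsSForm.apply_sub_cons {p : ℕ} {ω : SF A} (hω : IsSForm A p ω) {X Y : Vec A}
    (hX : IsVectorField A X) (hY : IsVectorField A Y) {ℓ : List (Vec A)} (hℓ : VFList A ℓ) :
    ω ((X - Y) :: ℓ) = ω (X :: ℓ) - ω (Y :: ℓ) := by
  have h := hω.map_add [] (X - Y) Y ℓ (by simp [VFList]) hℓ (hX.sub hY) hY
  simp only [sub_add_cancel, List.nil_append] at h
  rw [h, add_sub_cancel_right]

namespace IsConnection

variable {φ : Vec A → Vec A} (hφ : IsConnection A φ) {X : Vec A} (hX : IsVectorField A X)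
include hφ hX

theorem isVectorField_hpr : IsVectorField A (hpr A φ X) :=
  hX.sub (hφ.vf X hX)

theorem apply_hpr : φ (hpr A φ X) = 0 := by
  have h := hφ.map_add (hpr A φ X) (φ X) (hφ.isVectorField_hpr hX) (hφ.vf X hX)
  rwa [hpr, sub_add_cancel, hφ.idem X hX, right_eq_add] at h

theorem hpr_hpr : hpr A φ (hpr A φ X) = hpr A φ X := by
  change hpr A φ X - φ (hpr A φ X) = _
  rw [hφ.apply_hpr hX, sub_zero]

end IsConnection

noncomputable def insWith (b : Vec A → Vec A) (k : ℕ) (K : VF A) (ω : SF A) {n : ℕ}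
    (v : Fin n → Vec A) : A :=
  if hk : k ≤ n then
    (((k.factorial * (n - k).factorial : ℕ) : ℝ))⁻¹ •
      ∑ σ : Equiv.Perm (Fin n),
        (((Equiv.Perm.sign σ : ℤ) : ℝ)) •
          ω ((K (List.ofFn fun m : Fin k => v (σ (Fin.castLE hk m)))) ::
              List.ofFn fun m : Fin (n - k) =>
                b (v (σ ⟨k + (m : ℕ), by have := m.isLt; omega⟩)))
  else 0

theorem insS_apply (k : ℕ) (K : VF A) (ω : SF A) (ℓ : List (Vec A)) :
    insS A k K ω ℓ = insWith id k K ω ℓ.get := by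
  by_cases hk : k ≤ ℓ.length <;> simp [insS, insWith, hk]

theorem insH_apply (φ : Vec A → Vec A) (k : ℕ) (K : VF A) (ω : SF A) (ℓ : List (Vec A)) :
    insH A φ k K ω ℓ = insWith (hpr A φ) k K ω ℓ.get := by
  by_cases hk : k ≤ ℓ.length <;> simp [insH, insWith, hk]

theorem insWith_comp_cast {m n : ℕ} (h : m = n) (b : Vec A → Vec A) (k : ℕ) (K : VF A)
    (ω : SF A) (v : Fin n → Vec A) :
    insWith b k K ω (v ∘ Fin.cast h) = insWith b k K ω v := by
  subst h
  rfl

theorem insWith_comp (f b : Vec A → Vec A) (k : ℕ) (K : VF A) (ω : SF A) {n : ℕ}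
    (v : Fin n → Vec A) :
    insWith b k K ω (f ∘ v) = insWith (b ∘ f) k (fun ℓ => K (ℓ.map f)) ω v := by
  unfold insWith
  simp only [Function.comp_apply, List.map_ofFn, Function.comp_def]

theorem insWith_get_map (f b : Vec A → Vec A) (k : ℕ) (K : VF A) (ω : SF A)
    (ℓ : List (Vec A)) :
    insWith b k K ω (ℓ.map f).get = insWith (b ∘ f) k (fun ℓ => K (ℓ.map f)) ω ℓ.get := by
  rw [← insWith_comp, ← insWith_comp_cast (List.length_map f).symm]
  congr 1
  ext i
  simp

theorem insWith_hstar (φ b : Vec A → Vec A) (k : ℕ) (K : VF A) (ω : SF A) {n : ℕ}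
    (v : Fin n → Vec A) :
    insWith b k K (hstar A φ ω) v = insWith (hpr A φ ∘ b) k (postH A φ K) ω v := by
  unfold insWith
  simp only [hstar, LinearMap.pi_apply, LinearMap.proj_apply, List.map_cons, List.map_ofFn,
    Function.comp_def]
  rfl

theorem insWith_congr_left {b b' : Vec A → Vec A} {n : ℕ} {v : Fin n → Vec A}
    (h : ∀ i, b (v i) = b' (v i)) (k : ℕ) (K : VF A) (ω : SF A) :
    insWith b k K ω v = insWith b' k K ω v := by
  simp only [insWith, h]

theorem insWith_sub {p : ℕ} {ω : SF A} (hω : IsSForm A p ω) {K₁ K₂ : VF A}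
    (hK₁ : ∀ ℓ, VFList A ℓ → IsVectorField A (K₁ ℓ))
    (hK₂ : ∀ ℓ, VFList A ℓ → IsVectorField A (K₂ ℓ))
    {b : Vec A → Vec A} {n : ℕ} {v : Fin n → Vec A} (hv : ∀ i, IsVectorField A (v i))
    (hbv : ∀ i, IsVectorField A (b (v i))) (k : ℕ) :
    insWith b k (K₁ - K₂) ω v = insWith b k K₁ ω v - insWith b k K₂ ω v := by
  unfold insWith
  split_ifs
  · rw [← smul_sub, ← Finset.sum_sub_distrib]
    congr 1
    refine Finset.sum_congr rfl fun σ _ => ?_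
    rw [← smul_sub, Pi.sub_apply,
      hω.apply_sub_cons (hK₁ _ (VFList.ofFn fun _ => hv _)) (hK₂ _ (VFList.ofFn fun _ => hv _))
        (VFList.ofFn fun _ => hbv _)]
  · rw [sub_zero]

theorem hstar_insS_apply (φ : Vec A → Vec A) (k : ℕ) (K : VF A) (ω : SF A)
    (ℓ : List (Vec A)) :
    hstar A φ (insS A k K ω) ℓ = insWith (hpr A φ) k (precH A φ K) ω ℓ.get := by
  rw [hstar, LinearMap.pi_apply, LinearMap.proj_apply, insS_apply, insWith_get_map]
  rfl

theorem insS_hstar_apply (φ : Vec A → Vec A) (k : ℕ) (K : VF A) (ω : SF A)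
    (ℓ : List (Vec A)) :
    insS A k K (hstar A φ ω) ℓ = insWith (hpr A φ) k (postH A φ K) ω ℓ.get := by
  rw [insS_apply, insWith_hstar]
  rfl

namespace IsConnection

variable {φ : Vec A → Vec A} (hφ : IsConnection A φ)
include hφ

theorem vfList_map_hpr {ℓ : List (Vec A)} (hℓ : VFList A ℓ) : VFList A (ℓ.map (hpr A φ)) := by
  intro X hX
  obtain ⟨Y, hY, rfl⟩ := List.mem_map.mp hX
  exact hφ.isVectorField_hpr (hℓ Y hY)

theorem insWith_hpr_hstar {n : ℕ} {v : Fin n → Vec A} (hv : ∀ i, IsVectorField A (v i))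
    (k : ℕ) (K : VF A) (ω : SF A) :
    insWith (hpr A φ) k K (hstar A φ ω) v = insWith (hpr A φ) k (postH A φ K) ω v := by
  rw [insWith_hstar]
  exact insWith_congr_left (fun i => hφ.hpr_hpr (hv i)) k _ ω

variable (k : ℕ) (K : VF A) (ω : SF A) {ℓ : List (Vec A)} (hℓ : VFList A ℓ)
include hℓ

theorem hstar_insH_apply :
    hstar A φ (insH A φ k K ω) ℓ = insWith (hpr A φ) k (precH A φ K) ω ℓ.get := by
  rw [hstar, LinearMap.pi_apply, LinearMap.proj_apply, insH_apply, insWith_get_map]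
  exact insWith_congr_left (fun i => hφ.hpr_hpr (hℓ.get i)) k _ ω

theorem insH_hstar_apply :
    insH A φ k K (hstar A φ ω) ℓ = insWith (hpr A φ) k (postH A φ K) ω ℓ.get := by
  rw [insH_apply, hφ.insWith_hpr_hstar hℓ.get]

theorem hstar_insS_hstar_apply :
    hstar A φ (insS A k K (hstar A φ ω)) ℓ =
      insWith (hpr A φ) k (postH A φ (precH A φ K)) ω ℓ.get := by
  rw [hstar_insS_apply, hφ.insWith_hpr_hstar hℓ.get]

theorem hstar_insH_hstar_apply :
    hstar A φ (insH A φ k K (hstar A φ ω)) ℓ =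
      insWith (hpr A φ) k (postH A φ (precH A φ K)) ω ℓ.get := by
  rw [hφ.hstar_insH_apply k K _ hℓ, hφ.insWith_hpr_hstar hℓ.get]

theorem insH_postH_sub_precH_apply (hK : ∀ ℓ, VFList A ℓ → IsVectorField A (K ℓ)) {p : ℕ}
    (hω : IsSForm A p ω) :
    insH A φ k (postH A φ K - precH A φ K) ω ℓ =
      insWith (hpr A φ) k (postH A φ K) ω ℓ.get -
        insWith (hpr A φ) k (precH A φ K) ω ℓ.get := by
  rw [insH_apply]
  exact insWith_sub hω (fun ℓ' hℓ' => hφ.isVectorField_hpr (hK ℓ' hℓ'))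
    (fun ℓ' hℓ' => hK _ (hφ.vfList_map_hpr hℓ')) hℓ.get
    (fun i => hφ.isVectorField_hpr (hℓ.get i)) k

end IsConnection

end InsertionWith

theorem insertion_hstar_relations_general
    {EM : Type*} [NormedAddCommGroup EM] [NormedSpace ℝ EM]
    {HM : Type*} [TopologicalSpace HM] {IM : ModelWithCorners ℝ EM HM}
    {M : Type*} [TopologicalSpace M] [ChartedSpace HM M]
    (φ : Vec (SmoothFns IM M) → Vec (SmoothFns IM M))
    (hφ : IsConnection (SmoothFns IM M) φ)
    (k : ℕ) (K : VF (SmoothFns IM M)) (hK : IsVForm (SmoothFns IM M) (k + 1) K) :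
    (OpEq (SmoothFns IM M) (hstar (SmoothFns IM M) φ ∘ₗ insS (SmoothFns IM M) (k + 1) K) (insH (SmoothFns IM M) φ (k + 1) (precH (SmoothFns IM M) φ K)) ∧
      OpEq (SmoothFns IM M) (insH (SmoothFns IM M) φ (k + 1) (precH (SmoothFns IM M) φ K)) (hstar (SmoothFns IM M) φ ∘ₗ insH (SmoothFns IM M) φ (k + 1) K)) ∧
    (OpEq (SmoothFns IM M) (insS (SmoothFns IM M) (k + 1) K ∘ₗ hstar (SmoothFns IM M) φ) (insH (SmoothFns IM M) φ (k + 1) (postH (SmoothFns IM M) φ K)) ∧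
      OpEq (SmoothFns IM M) (insH (SmoothFns IM M) φ (k + 1) (postH (SmoothFns IM M) φ K)) (insH (SmoothFns IM M) φ (k + 1) K ∘ₗ hstar (SmoothFns IM M) φ)) ∧
    (OpEq (SmoothFns IM M) (insS (SmoothFns IM M) (k + 1) K ∘ₗ hstar (SmoothFns IM M) φ - hstar (SmoothFns IM M) φ ∘ₗ insS (SmoothFns IM M) (k + 1) K)
        (insH (SmoothFns IM M) φ (k + 1) K ∘ₗ hstar (SmoothFns IM M) φ - hstar (SmoothFns IM M) φ ∘ₗ insH (SmoothFns IM M) φ (k + 1) K) ∧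
      OpEq (SmoothFns IM M) (insH (SmoothFns IM M) φ (k + 1) K ∘ₗ hstar (SmoothFns IM M) φ - hstar (SmoothFns IM M) φ ∘ₗ insH (SmoothFns IM M) φ (k + 1) K)
        (insH (SmoothFns IM M) φ (k + 1) (postH (SmoothFns IM M) φ K - precH (SmoothFns IM M) φ K))) ∧
    (OpEq (SmoothFns IM M) (hstar (SmoothFns IM M) φ ∘ₗ insS (SmoothFns IM M) (k + 1) K ∘ₗ hstar (SmoothFns IM M) φ)
        (hstar (SmoothFns IM M) φ ∘ₗ insH (SmoothFns IM M) φ (k + 1) K ∘ₗ hstar (SmoothFns IM M) φ) ∧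
      OpEq (SmoothFns IM M) (hstar (SmoothFns IM M) φ ∘ₗ insH (SmoothFns IM M) φ (k + 1) K ∘ₗ hstar (SmoothFns IM M) φ)
        (insH (SmoothFns IM M) φ (k + 1) (postH (SmoothFns IM M) φ (precH (SmoothFns IM M) φ K)))) := by
  refine ⟨⟨?_, ?_⟩, ⟨?_, ?_⟩, ⟨?_, ?_⟩, ⟨?_, ?_⟩⟩ <;> intro p ω hω ℓ hℓ <;>
    simp only [LinearMap.comp_apply, LinearMap.sub_apply, Pi.sub_apply]
  · rw [hstar_insS_apply, insH_apply]
  · rw [hφ.hstar_insH_apply _ _ _ hℓ, insH_apply]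
  · rw [insS_hstar_apply, insH_apply]
  · rw [hφ.insH_hstar_apply _ _ _ hℓ, insH_apply]
  · rw [insS_hstar_apply, hstar_insS_apply, hφ.insH_hstar_apply _ _ _ hℓ,
      hφ.hstar_insH_apply _ _ _ hℓ]
  · rw [hφ.insH_hstar_apply _ _ _ hℓ, hφ.hstar_insH_apply _ _ _ hℓ,
      hφ.insH_postH_sub_precH_apply _ _ _ hℓ hK.vec hω]
  · rw [hφ.hstar_insS_hstar_apply _ _ _ hℓ, hφ.hstar_insH_hstar_apply _ _ _ hℓ]
  · rw [hφ.hstar_insH_hstar_apply _ _ _ hℓ, insH_apply]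

/-- **Lemma 2.3.4.**  For `K ∈ Ω^{k+1}(M;TM)` the following identities of operators on
`Ω(M)` hold: `h* ∘ i(K) = i^h(K ∘ Λ^{k+1}h) = h* ∘ i^h(K)`;
`i(K) ∘ h* = i^h(h ∘ K) = i^h(K) ∘ h*`;
`[i(K), h*] = [i^h(K), h*] = i^h(h ∘ K - K ∘ Λ^{k+1}h)`; and
`h* ∘ i(K) ∘ h* = h* ∘ i^h(K) ∘ h* = i^h(h ∘ K ∘ Λ^{k+1}h)`. -/
theorem insertion_hstar_relations
    {EM : Type*} [NormedAddCommGroup EM] [NormedSpace ℝ EM]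
    {HM : Type*} [TopologicalSpace HM] {IM : ModelWithCorners ℝ EM HM}
    {M : Type*} [TopologicalSpace M] [ChartedSpace HM M] [IsManifold IM (⊤ : ℕ∞) M]
    (φ : Vec (SmoothFns IM M) → Vec (SmoothFns IM M))
    (hφ : IsConnection (SmoothFns IM M) φ)
    (k : ℕ) (K : VF (SmoothFns IM M)) (hK : IsVForm (SmoothFns IM M) (k + 1) K) :
    (OpEq (SmoothFns IM M) (hstar (SmoothFns IM M) φ ∘ₗ insS (SmoothFns IM M) (k + 1) K) (insH (SmoothFns IM M) φ (k + 1) (precH (SmoothFns IM M) φ K)) ∧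
      OpEq (SmoothFns IM M) (insH (SmoothFns IM M) φ (k + 1) (precH (SmoothFns IM M) φ K)) (hstar (SmoothFns IM M) φ ∘ₗ insH (SmoothFns IM M) φ (k + 1) K)) ∧
    (OpEq (SmoothFns IM M) (insS (SmoothFns IM M) (k + 1) K ∘ₗ hstar (SmoothFns IM M) φ) (insH (SmoothFns IM M) φ (k + 1) (postH (SmoothFns IM M) φ K)) ∧
      OpEq (SmoothFns IM M) (insH (SmoothFns IM M) φ (k + 1) (postH (SmoothFns IM M) φ K)) (insH (SmoothFns IM M) φ (k + 1) K ∘ₗ hstar (SmoothFns IM M) φ)) ∧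
    (OpEq (SmoothFns IM M) (insS (SmoothFns IM M) (k + 1) K ∘ₗ hstar (SmoothFns IM M) φ - hstar (SmoothFns IM M) φ ∘ₗ insS (SmoothFns IM M) (k + 1) K)
        (insH (SmoothFns IM M) φ (k + 1) K ∘ₗ hstar (SmoothFns IM M) φ - hstar (SmoothFns IM M) φ ∘ₗ insH (SmoothFns IM M) φ (k + 1) K) ∧
      OpEq (SmoothFns IM M) (insH (SmoothFns IM M) φ (k + 1) K ∘ₗ hstar (SmoothFns IM M) φ - hstar (SmoothFns IM M) φ ∘ₗ insH (SmoothFns IM M) φ (k + 1) K)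
        (insH (SmoothFns IM M) φ (k + 1) (postH (SmoothFns IM M) φ K - precH (SmoothFns IM M) φ K))) ∧
    (OpEq (SmoothFns IM M) (hstar (SmoothFns IM M) φ ∘ₗ insS (SmoothFns IM M) (k + 1) K ∘ₗ hstar (SmoothFns IM M) φ)
        (hstar (SmoothFns IM M) φ ∘ₗ insH (SmoothFns IM M) φ (k + 1) K ∘ₗ hstar (SmoothFns IM M) φ) ∧
      OpEq (SmoothFns IM M) (hstar (SmoothFns IM M) φ ∘ₗ insH (SmoothFns IM M) φ (k + 1) K ∘ₗ hstar (SmoothFns IM M) φ)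
        (insH (SmoothFns IM M) φ (k + 1) (postH (SmoothFns IM M) φ (precH (SmoothFns IM M) φ K)))) :=
  insertion_hstar_relations_general φ hφ k K hK
end
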